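/- Let x, h ∈ ℝ^n, let T₀ ⊆ {1,…,n}, let T̃₁,…,T̃_N ⊆ {1,…,n} be pairwise disjoint with union T̃, and let w₁,…,w_N ∈ [0,1]. If ‖x + h‖_{1,w} ≤ ‖x‖_{1,w}, then Σ_{i=1}^N wᵢ‖h_{T̃ᵢ∩T₀ᶜ}‖₁ + ‖h_{T̃ᶜ∩T₀ᶜ}‖₁ ≤ Σ_{i=1}^N wᵢ‖h_{T̃ᵢ∩T₀}‖₁ + ‖h_{T̃ᶜ∩T₀}‖₁ + 2(Σ_{i=1}^N wᵢ‖x_{T̃ᵢ∩T₀ᶜ}‖₁ + ‖x_{T̃ᶜ∩T₀ᶜ}‖₁). -/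

import Mathlib

open Finset

/-- The restriction of a vector to a set of indices: agrees with `x` on `S`, zero elsewhere. -/
noncomputable def restr {n : ℕ} (x : Fin n → ℝ) (S : Finset (Fin n)) : Fin n → ℝ :=
  fun i => if i ∈ S then x i else 0

/-- The ℓ1 norm of a vector in ℝ^n. -/
noncomputable def nrm1 {n : ℕ} (x : Fin n → ℝ) : ℝ := ∑ i, |x i|

/-- The ℓ2 (Euclidean) norm of a vector in ℝ^n. -/
noncomputable def nrm2 {n : ℕ} (x : Fin n → ℝ) : ℝ := Real.sqrt (∑ i, (x i) ^ 2)

/-- The weighted ℓ1 norm associated with support-estimate sets `T 1, …, T N`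
(with weights `w 1, …, w N`), where weight `1` is used off `⋃ i, T i`. -/
noncomputable def wl1 {n : ℕ} (N : ℕ) (T : ℕ → Finset (Fin n)) (w : ℕ → ℝ)
    (x : Fin n → ℝ) : ℝ :=
  ∑ i ∈ Finset.Icc 1 N, w i * nrm1 (restr x (T i)) +
    nrm1 (restr x ((Finset.Icc 1 N).biUnion T)ᶜ)

/-- `A` satisfies the restricted isometry bound with constant `δ` at sparsity level `k`. -/
def RIPBound {m n : ℕ} (A : Matrix (Fin m) (Fin n) ℝ) (δ : ℝ) (k : ℕ) : Prop :=
  ∀ v : Fin n → ℝ, (Finset.univ.filter fun i => v i ≠ 0).card ≤ k →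
    (1 - δ) * (nrm2 v) ^ 2 ≤ (nrm2 (A.mulVec v)) ^ 2 ∧
      (nrm2 (A.mulVec v)) ^ 2 ≤ (1 + δ) * (nrm2 v) ^ 2

/-- The constant `K_N` appearing in the multi-weight recovery guarantee. -/
noncomputable def KN (N : ℕ) (w ρ α : ℕ → ℝ) : ℝ :=
  w N + (1 - w 1) * Real.sqrt (1 + ∑ i ∈ Finset.Icc 1 N, (ρ i - 2 * α i * ρ i)) +
    ∑ j ∈ Finset.Icc 2 N, (w (j - 1) - w j) *
      Real.sqrt (1 + ∑ i ∈ Finset.Icc j N, (ρ i - 2 * α i * ρ i))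

/-- The quantity `D` appearing in the multi-weight error bounds. -/
noncomputable def DD {n : ℕ} (N : ℕ) (T : ℕ → Finset (Fin n)) (T₀ : Finset (Fin n))
    (w : ℕ → ℝ) (x : Fin n → ℝ) : ℝ :=
  (∑ i ∈ Finset.Icc 1 N, w i) * nrm1 (restr x T₀ᶜ) +
    (1 - ∑ i ∈ Finset.Icc 1 N, w i) *
      nrm1 (restr x (((Finset.Icc 1 N).biUnion T)ᶜ ∩ T₀ᶜ)) -
    ∑ i ∈ Finset.Icc 1 N, (∑ j ∈ (Finset.Icc 1 N).erase i, w j) *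
      nrm1 (restr x (T i ∩ T₀ᶜ))

/-- The set `S_j = (T₀ ∪ ⋃_{i=j}^N T̃ᵢ) \ ⋃_{i=j}^N (T̃ᵢ ∩ T₀)`. -/
def SS {n : ℕ} (N : ℕ) (T : ℕ → Finset (Fin n)) (T₀ : Finset (Fin n)) (j : ℕ) :
    Finset (Fin n) :=
  (T₀ ∪ (Finset.Icc j N).biUnion T) \ (Finset.Icc j N).biUnion (fun i => T i ∩ T₀)

lemma nrm1_restr {n : ℕ} (y : Fin n → ℝ) (S : Finset (Fin n)) :
    nrm1 (restr y S) = ∑ i ∈ S, |y i| := by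
  simp [nrm1, restr, apply_ite abs, Finset.sum_ite_mem]

lemma nrm1_restr_inter_add_inter_compl {n : ℕ} (y : Fin n → ℝ) (S T₀ : Finset (Fin n)) :
    nrm1 (restr y (S ∩ T₀)) + nrm1 (restr y (S ∩ T₀ᶜ)) = nrm1 (restr y S) := by
  simp only [nrm1_restr]
  rw [← Finset.sum_inter_add_sum_sdiff S T₀, Finset.sdiff_eq_inter_compl]

lemma nrm1_restr_sub_le_add {n : ℕ} (x h : Fin n → ℝ) (S : Finset (Fin n)) :
    nrm1 (restr x S) - nrm1 (restr h S) ≤ nrm1 (restr (x + h) S) := by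
  simp only [nrm1_restr, ← Finset.sum_sub_distrib, Pi.add_apply]
  gcongr with i
  simpa using abs_sub_abs_le_abs_sub (x i) (-h i)

/-- The reverse triangle inequality, applied as `|x| - |h| ≤ |x + h|` on `T₀` and as
`|h| - |x| ≤ |x + h|` off `T₀`. -/
lemma nrm1_restr_add_inter_compl_le {n : ℕ} (x h : Fin n → ℝ) (S T₀ : Finset (Fin n)) :
    nrm1 (restr x S) + nrm1 (restr h (S ∩ T₀ᶜ)) ≤
      nrm1 (restr (x + h) S) + nrm1 (restr h (S ∩ T₀)) + 2 * nrm1 (restr x (S ∩ T₀ᶜ)) := by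
  have on_T₀ := nrm1_restr_sub_le_add x h (S ∩ T₀)
  have off_T₀ := nrm1_restr_sub_le_add h x (S ∩ T₀ᶜ)
  rw [add_comm h x] at off_T₀
  have split_x := nrm1_restr_inter_add_inter_compl x S T₀
  have split_xh := nrm1_restr_inter_add_inter_compl (x + h) S T₀
  linarith

lemma wl1_add_inter_compl_le {n N : ℕ} (x h : Fin n → ℝ) (T₀ : Finset (Fin n))
    (T : ℕ → Finset (Fin n)) (w : ℕ → ℝ) (hw : ∀ i ∈ Finset.Icc 1 N, 0 ≤ w i) :
    wl1 N T w x + (∑ i ∈ Finset.Icc 1 N, w i * nrm1 (restr h (T i ∩ T₀ᶜ)) +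
        nrm1 (restr h (((Finset.Icc 1 N).biUnion T)ᶜ ∩ T₀ᶜ))) ≤
      wl1 N T w (x + h) + (∑ i ∈ Finset.Icc 1 N, w i * nrm1 (restr h (T i ∩ T₀)) +
        nrm1 (restr h (((Finset.Icc 1 N).biUnion T)ᶜ ∩ T₀))) +
        2 * (∑ i ∈ Finset.Icc 1 N, w i * nrm1 (restr x (T i ∩ T₀ᶜ)) +
          nrm1 (restr x (((Finset.Icc 1 N).biUnion T)ᶜ ∩ T₀ᶜ))) := by
  have on_pieces : ∑ i ∈ Finset.Icc 1 N, w i *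
        (nrm1 (restr x (T i)) + nrm1 (restr h (T i ∩ T₀ᶜ))) ≤
      ∑ i ∈ Finset.Icc 1 N, w i * (nrm1 (restr (x + h) (T i)) + nrm1 (restr h (T i ∩ T₀)) +
        2 * nrm1 (restr x (T i ∩ T₀ᶜ))) :=
    Finset.sum_le_sum fun i hi =>
      mul_le_mul_of_nonneg_left (nrm1_restr_add_inter_compl_le x h (T i) T₀) (hw i hi)
  have off_pieces := nrm1_restr_add_inter_compl_le x h ((Finset.Icc 1 N).biUnion T)ᶜ T₀
  simp only [mul_add, Finset.sum_add_distrib, ← Finset.mul_sum, mul_left_comm (w _) 2]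
    at on_pieces
  unfold wl1
  linarith

theorem reverse_triangle_consequence_general
    {n N : ℕ} (x h : Fin n → ℝ) (T₀ : Finset (Fin n)) (T : ℕ → Finset (Fin n))
    (w : ℕ → ℝ) (hw : ∀ i ∈ Finset.Icc 1 N, 0 ≤ w i ∧ w i ≤ 1)
    (hmin : wl1 N T w (x + h) ≤ wl1 N T w x) :
    ∑ i ∈ Finset.Icc 1 N, w i * nrm1 (restr h (T i ∩ T₀ᶜ)) +
        nrm1 (restr h (((Finset.Icc 1 N).biUnion T)ᶜ ∩ T₀ᶜ)) ≤
      ∑ i ∈ Finset.Icc 1 N, w i * nrm1 (restr h (T i ∩ T₀)) +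
        nrm1 (restr h (((Finset.Icc 1 N).biUnion T)ᶜ ∩ T₀)) +
        2 * (∑ i ∈ Finset.Icc 1 N, w i * nrm1 (restr x (T i ∩ T₀ᶜ)) +
          nrm1 (restr x (((Finset.Icc 1 N).biUnion T)ᶜ ∩ T₀ᶜ))) := by
  have := wl1_add_inter_compl_le x h T₀ T w fun i hi => (hw i hi).1
  linarith

/-- consequence of minimality via the reverse triangle inequality. -/
theorem reverse_triangle_consequence
    {n N : ℕ} (x h : Fin n → ℝ) (T₀ : Finset (Fin n)) (T : ℕ → Finset (Fin n))
    (hdisj : ∀ i ∈ Finset.Icc 1 N, ∀ j ∈ Finset.Icc 1 N, i ≠ j → Disjoint (T i) (T j))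
    (w : ℕ → ℝ) (hw : ∀ i ∈ Finset.Icc 1 N, 0 ≤ w i ∧ w i ≤ 1)
    (hmin : wl1 N T w (x + h) ≤ wl1 N T w x) :
    ∑ i ∈ Finset.Icc 1 N, w i * nrm1 (restr h (T i ∩ T₀ᶜ)) +
        nrm1 (restr h (((Finset.Icc 1 N).biUnion T)ᶜ ∩ T₀ᶜ)) ≤
      ∑ i ∈ Finset.Icc 1 N, w i * nrm1 (restr h (T i ∩ T₀)) +
        nrm1 (restr h (((Finset.Icc 1 N).biUnion T)ᶜ ∩ T₀)) +
        2 * (∑ i ∈ Finset.Icc 1 N, w i * nrm1 (restr x (T i ∩ T₀ᶜ)) +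
          nrm1 (restr x (((Finset.Icc 1 N).biUnion T)ᶜ ∩ T₀ᶜ))) :=
  reverse_triangle_consequence_general x h T₀ T w hw hmin
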